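/- (Persistence case) If σ : ℕ → 2^{Π_aug} is the flattened word of a descendant with data (p, k, ℓ, J₁, J₄, J₂¹,…,J₂ᵏ, J₃¹,…,J₃ˡ, O₂, O₃), then there exists N ∈ ℕ such that J₄ ⊆ σ(n) for all n ≥ N; that is, σ satisfies the persistence specification ◇□(⋀_{π∈J₄} π). In particular one may take N = n₁ + n₂ + ⋯ + n_p − 1, the position of the final element of block p. -/
import Mathlib

/-- A literal over `N` atomic propositions: `(true, m)` is the atomic proposition `πₘ`
and `(false, m)` is its negation `π̄ₘ`. -/
abbrev Literal (N : ℕ) := Bool × Fin N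

/-- A descendant of a lasso template (Definition 7 of the paper), given in block form:
block lengths `len i ≥ 1` (blocks indexed from `0`, so block `i` here is block `i+1` of
the paper) and sets of literals `blk i j` (`j < len i`), each containing exactly one of
`πₘ`, `π̄ₘ` for every `m`, satisfying conditions (1)–(5) of Definition 7. -/
structure Descendant (N : ℕ) where
  /-- number of prefix blocks `p ≥ 1` -/
  p : ℕ
  /-- number of reachability sets, `0 ≤ k ≤ p` -/
  k : ℕ
  /-- number of recurrence sets `ℓ ≥ 1` -/
  ell : ℕ
  hp : 1 ≤ p
  hk : k ≤ p
  hell : 1 ≤ ell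
  /-- the always literal set `J₁` -/
  J1 : Set (Literal N)
  /-- the persistence literal set `J₄` -/
  J4 : Set (Literal N)
  /-- the reachability literal sets `J₂¹,…,J₂ᵏ` -/
  J2 : Fin k → Set (Literal N)
  /-- the recurrence literal sets `J₃¹,…,J₃ˡ` -/
  J3 : Fin ell → Set (Literal N)
  /-- the lasso template enumeration `O₂` -/
  O2 : Equiv.Perm (Fin k)
  /-- the lasso template enumeration `O₃` -/
  O3 : Equiv.Perm (Fin ell)
  /-- block lengths `nᵢ` -/
  len : ℕ → ℕ
  hlen : ∀ i, 1 ≤ len i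
  /-- the sets `σ_{i,j} ⊆ Π_aug`, for `j < len i` -/
  blk : ℕ → ℕ → Set (Literal N)
  /-- each `σ_{i,j}` contains exactly one of `πₘ` and `π̄ₘ` for every `m` -/
  hexact : ∀ i j, j < len i → ∀ m : Fin N, ((true, m) ∈ blk i j ↔ (false, m) ∉ blk i j)
  /-- condition (1): `J₁ ⊆ σ_{i,j}` for all prefix blocks -/
  cond1 : ∀ i j, i < p → j < len i → J1 ⊆ blk i j
  /-- condition (2): `J₂^{O₂(i)} ⊆ σ_{i,nᵢ}` for `i ∈ {1,…,k}` -/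
  cond2 : ∀ i : Fin k, J2 (O2 i) ⊆ blk (i : ℕ) (len (i : ℕ) - 1)
  /-- condition (3): `J₄ ⊆ σ_{p,n_p}` -/
  cond3 : J4 ⊆ blk (p - 1) (len (p - 1) - 1)
  /-- condition (4): `J₃^{O₃(i)} ⊆ σ_{m,n_m}` with `m = p + d·ℓ + i` -/
  cond4 : ∀ (d : ℕ) (i : Fin ell),
    J3 (O3 i) ⊆ blk (p + d * ell + (i : ℕ)) (len (p + d * ell + (i : ℕ)) - 1)
  /-- condition (5): `J₁ ∪ J₄ ⊆ σ_{i,j}` for all suffix blocks `i > p` -/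
  cond5 : ∀ i j, p ≤ i → j < len i → J1 ∪ J4 ⊆ blk i j

/-- Cumulative block length: the position in the flattened word at which block `i` starts. -/
def Descendant.cum {N : ℕ} (D : Descendant N) (i : ℕ) : ℕ :=
  ∑ t ∈ Finset.range i, D.len t

/-- `σ : ℕ → 2^{Π_aug}` is the flattened word of the descendant `D`, obtained by
concatenating the blocks in order. -/
def IsFlattenedWord {N : ℕ} (D : Descendant N) (σ : ℕ → Set (Literal N)) : Prop :=
  ∀ i j, j < D.len i → σ (D.cum i + j) = D.blk i j

lemma Descendant.cum_le {N : ℕ} (D : Descendant N) (i : ℕ) : i ≤ D.cum i := by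
  calc i = ∑ t ∈ Finset.range i, 1 := by simp
  _ ≤ D.cum i := Finset.sum_le_sum fun t _ => D.hlen t

lemma Descendant.cum_succ {N : ℕ} (D : Descendant N) (i : ℕ) :
    D.cum (i + 1) = D.cum i + D.len i := Finset.sum_range_succ _ _

lemma Descendant.exists_decomp {N : ℕ} (D : Descendant N) (n : ℕ) :
    ∃ i j, j < D.len i ∧ n = D.cum i + j ∧ n < D.cum (i + 1) := by
  set P := fun i => D.cum i ≤ n with hP
  have h0 : P 0 := by simp [hP, Descendant.cum]
  set i := Nat.findGreatest P n with hi
  have hPi : P i := Nat.findGreatest_spec (by simp) h0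
  have hlt : ¬ P (i + 1) := by
    intro h
    have h1 : i + 1 ≤ n := le_trans (D.cum_le (i+1)) h
    have := Nat.le_findGreatest h1 h
    omega
  simp only [hP, not_le] at hPi hlt
  refine ⟨i, n - D.cum i, ?_, by omega, by omega⟩
  have := D.cum_succ i
  omega

/-- Persistence case of Proposition 3: the flattened word `σ` of a descendant satisfies
the persistence specification `◇□(⋀_{π ∈ J₄} π)`; in particular one may take
`N = n₁ + ⋯ + n_p - 1`, the position of the final element of block `p`. -/
theorem descendant_satisfies_persistence {N : ℕ} (D : Descendant N)
    (σ : ℕ → Set (Literal N)) (hσ : IsFlattenedWord D σ) :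
    (∀ n : ℕ, D.cum D.p - 1 ≤ n → D.J4 ⊆ σ n)
    ∧ (∃ N' : ℕ, ∀ n ≥ N', D.J4 ⊆ σ n) := by
  have key : ∀ n : ℕ, D.cum D.p - 1 ≤ n → D.J4 ⊆ σ n := by
    intro n hn
    have hcum1 : 1 ≤ D.cum D.p := le_trans D.hp (D.cum_le _)
    have hp := D.hp
    rcases eq_or_lt_of_le hn with heq | hgt
    · -- n = cum p - 1, last position of block p-1
      have hps : D.p - 1 + 1 = D.p := by omega
      have hc : D.cum (D.p - 1 + 1) = D.cum (D.p - 1) + D.len (D.p - 1) := D.cum_succ _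
      rw [hps] at hc
      have hl := D.hlen (D.p - 1)
      have hn' : n = D.cum (D.p - 1) + (D.len (D.p - 1) - 1) := by omega
      rw [hn', hσ _ _ (by omega)]
      exact D.cond3
    · -- n ≥ cum p : block i ≥ p
      obtain ⟨i, j, hj, hnij, hnlt⟩ := D.exists_decomp n
      have hip : D.p ≤ i := by
        by_contra h
        push_neg at h
        have : D.cum (i + 1) ≤ D.cum D.p :=
          Finset.sum_le_sum_of_subset (Finset.range_subset_range.2 (by omega))
        omega
      rw [hnij, hσ _ _ hj]
      exact (Set.subset_union_right).trans (D.cond5 i j hip hj)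
  exact ⟨key, D.cum D.p - 1, fun n hn => key n hn⟩
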